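/- Assume f satisfies the uniqueness condition and T_I ≠ 0 for a word I. If T_I has a nonzero fixed vector a, then f_I has a fixed point x, and the set of all fixed vectors of T_I equals ℂ·e_x. -/

import Mathlib

/-- `x` is a fixed point of the composite partial map `f_I` determined by the word `I`:
the composite of the restrictions of `f` to the classes `X_{i_j}` (where `c` records
the class of each point) is defined at `x` and returns `x`. -/
def IsWordFixedPt {X : Type*} {k : ℕ} (f : X → X) (c : X → Fin k)
    (I : List (Fin k)) (x : X) : Prop :=
  f^[I.length] x = x ∧ ∀ j : Fin I.length, c (f^[(j : ℕ)] x) = I.get j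

/-- The uniqueness condition: every composite `f_I` over a nonempty word `I`
has at most one fixed point. -/
def UniqCond {X : Type*} {k : ℕ} (f : X → X) (c : X → Fin k) : Prop :=
  ∀ I : List (Fin k), I ≠ [] → ∀ x y : X,
    IsWordFixedPt f c I x → IsWordFixedPt f c I y → x = y

/-!
The coefficients `⟪e z, a⟫` of a fixed vector `a` of `T_I` are constant along `f_I` and vanish
off its range. If `⟪e y, a⟫ ≠ 0`, the level set `S = {z | ⟪e z, a⟫ = ⟪e y, a⟫}` is finite (the
coefficients are square-summable) and is covered by the image of its points in the domain of the
injective partial map `f_I`; counting shows that `f_I` permutes `S`, so `y` is `f_I`-periodic with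
some period `p > 0`. Then `y` and `f_I y` are both fixed points of `f_J` for the word `J = I^p`,
and uniqueness forces `f_I y = y`. Hence a fixed vector has a single nonzero coefficient, at the
unique fixed point of `f_I`.
-/
open Set Function
open scoped InnerProductSpace

theorem Set.Finite.subset_and_mapsTo_of_subset_image_inter {α : Type*} {s D : Set α} {F : α → α}
    (hs : s.Finite) (hinj : InjOn F D) (h : s ⊆ F '' (s ∩ D)) : s ⊆ D ∧ MapsTo F s s := by
  have hsD : s ∩ D = s := eq_of_subset_of_ncard_le inter_subset_left
    ((ncard_le_ncard h ((hs.inter_of_left D).image F)).trans_eq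
      (hinj.mono inter_subset_right).ncard_image) hs
  have hsD' : s ⊆ D := inter_eq_left.mp hsD
  rw [hsD] at h
  have himage : s = F '' s :=
    eq_of_subset_of_ncard_le h (hinj.mono hsD').ncard_image.le (hs.image F)
  exact ⟨hsD', mapsTo_iff_image_subset.mpr himage.symm.subset⟩

theorem Set.Finite.exists_pos_isPeriodicPt {α : Type*} {s : Set α} {F : α → α} (hs : s.Finite)
    (hmaps : MapsTo F s s) (hinj : InjOn F s) {x : α} (hx : x ∈ s) :
    ∃ n > 0, IsPeriodicPt F n x := by
  have : Finite s := hs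
  obtain ⟨n, hn, hper⟩ :=
    mem_periodicPts.mp ((hmaps.restrict_inj.mpr hinj).mem_periodicPts ⟨x, hx⟩)
  refine ⟨n, hn, ?_⟩
  have := congrArg Subtype.val hper
  rwa [hmaps.iterate_restrict, MapsTo.val_restrict_apply] at this

theorem Orthonormal.finite_setOf_inner_eq {ι 𝕜 E : Type*} [RCLike 𝕜] [NormedAddCommGroup E]
    [InnerProductSpace 𝕜 E] {v : ι → E} (hv : Orthonormal 𝕜 v) (x : E) {α : 𝕜} (hα : α ≠ 0) :
    {i | ⟪v i, x⟫_𝕜 = α}.Finite := by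
  have hev := (hv.inner_products_summable x).tendsto_cofinite_zero.eventually
    (gt_mem_nhds (pow_pos (norm_pos_iff.mpr hα) 2))
  refine (Filter.eventually_cofinite.mp hev).subset fun i hi => ?_
  simp_all

theorem HilbertBasis.ext_inner {ι 𝕜 E : Type*} [RCLike 𝕜] [NormedAddCommGroup E]
    [InnerProductSpace 𝕜 E] (b : HilbertBasis ι 𝕜 E) {v w : E}
    (h : ∀ i, ⟪b i, v⟫_𝕜 = ⟪b i, w⟫_𝕜) : v = w :=
  b.repr.injective <| lp.ext <| funext fun i => by simp only [b.repr_apply_apply, h i]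

theorem HilbertBasis.eq_inner_smul_of_inner_eq_zero {ι 𝕜 E : Type*} [RCLike 𝕜]
    [NormedAddCommGroup E] [InnerProductSpace 𝕜 E] (b : HilbertBasis ι 𝕜 E) {v : E} {i : ι}
    (h : ∀ j ≠ i, ⟪b j, v⟫_𝕜 = 0) : v = ⟪b i, v⟫_𝕜 • b i := by
  rw [← b.repr_apply_apply]
  exact (b.hasSum_repr v).unique <| hasSum_single i fun j hj => by
    rw [b.repr_apply_apply, h j hj, zero_smul]

section Words

variable {X : Type*} {k : ℕ} (f : X → X) (c : X → Fin k)

def IsWordPath : List (Fin k) → X → Prop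
  | [], _ => True
  | i :: I, x => c x = i ∧ IsWordPath I (f x)

variable {f c}

theorem isWordPath_iff_forall_get {I : List (Fin k)} {x : X} :
    IsWordPath f c I x ↔ ∀ j : Fin I.length, c (f^[j] x) = I.get j := by
  induction I generalizing x with
  | nil => simp [IsWordPath]
  | cons i I ih =>
    simp only [IsWordPath, ih, List.length_cons, Fin.forall_fin_succ, Fin.val_zero,
      iterate_zero_apply, List.get_eq_getElem, Fin.val_succ, iterate_succ_apply,
      List.getElem_cons_zero, List.getElem_cons_succ]

theorem isWordFixedPt_iff {I : List (Fin k)} {x : X} :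
    IsWordFixedPt f c I x ↔ f^[I.length] x = x ∧ IsWordPath f c I x := by
  rw [IsWordFixedPt, isWordPath_iff_forall_get]

theorem isWordPath_append {I J : List (Fin k)} {x : X} :
    IsWordPath f c (I ++ J) x ↔ IsWordPath f c I x ∧ IsWordPath f c J (f^[I.length] x) := by
  induction I generalizing x with
  | nil => simp [IsWordPath]
  | cons i I ih => simp [IsWordPath, ih, iterate_succ_apply, and_assoc]

theorem injOn_iterate_length_setOf_isWordPath (hpart : ∀ i, InjOn f {x | c x = i})
    (I : List (Fin k)) : InjOn f^[I.length] {x | IsWordPath f c I x} := by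
  induction I with
  | nil => simp [injOn_id]
  | cons i I ih =>
    rintro x ⟨hx, hxI⟩ y ⟨hy, hyI⟩ hxy
    exact hpart i hx hy (ih hxI hyI hxy)

theorem isWordPath_flatten_replicate {I : List (Fin k)} {x : X}
    (h : ∀ j, IsWordPath f c I ((f^[I.length])^[j] x)) (q : ℕ) :
    IsWordPath f c (List.replicate q I).flatten x := by
  induction q generalizing x with
  | zero => trivial
  | succ q ih =>
    rw [List.replicate_succ, List.flatten_cons, isWordPath_append]
    exact ⟨h 0, ih fun j => iterate_succ_apply _ j x ▸ h (j + 1)⟩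

theorem UniqCond.isWordFixedPt_of_isPeriodicPt (hu : UniqCond f c) {I : List (Fin k)}
    (hI : I ≠ []) {p : ℕ} (hp : 0 < p) {x : X} (hper : IsPeriodicPt f^[I.length] p x)
    (hpath : ∀ j, IsWordPath f c I ((f^[I.length])^[j] x)) : IsWordFixedPt f c I x := by
  -- `x` and `f_I x` are both fixed points of `f_J`, where `J` is `I` repeated `p` times
  set J := (List.replicate p I).flatten
  have hJ : J ≠ [] := by simpa [J] using ⟨hp.ne', hI⟩
  have hJlen : f^[J.length] = (f^[I.length])^[p] := by
    simp [J, List.sum_replicate, ← iterate_mul, mul_comm]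
  have hfixJ : ∀ y, IsPeriodicPt f^[I.length] p y →
      (∀ j, IsWordPath f c I ((f^[I.length])^[j] y)) → IsWordFixedPt f c J y := fun y hy hpath =>
    isWordFixedPt_iff.mpr ⟨hJlen ▸ hy, isWordPath_flatten_replicate hpath p⟩
  have hxfx : x = f^[I.length] x := hu J hJ _ _ (hfixJ x hper hpath)
    (hfixJ _ hper.apply fun j => iterate_succ_apply _ j x ▸ hpath (j + 1))
  exact isWordFixedPt_iff.mpr ⟨hxfx.symm, hpath 0⟩

end Words

section WordOperators

variable {X : Type*} {k : ℕ} {f : X → X} {c : X → Fin k}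
  {H : Type*} [NormedAddCommGroup H] [InnerProductSpace ℂ H]
  {e : HilbertBasis X ℂ H} {T : Fin k → H →L[ℂ] H}

-- `T_I = T_{i_m} ⋯ T_{i_1}`: the first letter of the word acts first.
variable (T) in
def wordOp (I : List (Fin k)) : H →L[ℂ] H :=
  I.foldl (fun A i => (T i).comp A) (ContinuousLinearMap.id ℂ H)

theorem foldl_comp_eq_wordOp_comp (I : List (Fin k)) (A : H →L[ℂ] H) :
    I.foldl (fun A i => (T i).comp A) A = (wordOp T I).comp A := by
  induction I generalizing A with
  | nil => rfl
  | cons i I ih =>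
    change _ = (List.foldl _ ((T i).comp (ContinuousLinearMap.id ℂ H)) I).comp A
    rw [List.foldl_cons, ih, ih, ContinuousLinearMap.comp_id, ContinuousLinearMap.comp_assoc]

theorem wordOp_cons (i : Fin k) (I : List (Fin k)) :
    wordOp T (i :: I) = (wordOp T I).comp (T i) :=
  foldl_comp_eq_wordOp_comp I _

variable (hT : ∀ i x, T i (e x) = if c x = i then e (f x) else 0)
include hT

theorem wordOp_apply_of_isWordPath {I : List (Fin k)} {x : X} (h : IsWordPath f c I x) :
    wordOp T I (e x) = e (f^[I.length] x) := by
  induction I generalizing x with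
  | nil => rfl
  | cons i I ih =>
    rw [wordOp_cons, ContinuousLinearMap.comp_apply, hT, if_pos h.1, ih h.2]
    rfl

theorem wordOp_apply_of_not_isWordPath {I : List (Fin k)} {x : X} (h : ¬IsWordPath f c I x) :
    wordOp T I (e x) = 0 := by
  induction I generalizing x with
  | nil => exact absurd trivial h
  | cons i I ih =>
    rw [wordOp_cons, ContinuousLinearMap.comp_apply, hT]
    split_ifs with hx
    · exact ih fun hI => h ⟨hx, hI⟩
    · exact map_zero _

variable [CompleteSpace H]

theorem adjoint_wordOp_apply_of_isWordPath (hpart : ∀ i, InjOn f {x | c x = i})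
    {I : List (Fin k)} {x : X} (hx : IsWordPath f c I x) :
    ContinuousLinearMap.adjoint (wordOp T I) (e (f^[I.length] x)) = e x := by
  refine e.ext_inner fun z => ?_
  rw [ContinuousLinearMap.adjoint_inner_right]
  by_cases hz : IsWordPath f c I z
  · classical
    rw [wordOp_apply_of_isWordPath hT hz, orthonormal_iff_ite.mp e.orthonormal,
      orthonormal_iff_ite.mp e.orthonormal]
    simp only [(injOn_iterate_length_setOf_isWordPath hpart I).eq_iff hz hx]
  · rw [wordOp_apply_of_not_isWordPath hT hz, inner_zero_left,
      e.orthonormal.2 fun hzx => hz (by rwa [hzx])]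

theorem adjoint_wordOp_apply_of_notMem_image {I : List (Fin k)} {y : X}
    (hy : y ∉ f^[I.length] '' {x | IsWordPath f c I x}) :
    ContinuousLinearMap.adjoint (wordOp T I) (e y) = 0 := by
  refine e.ext_inner fun z => ?_
  rw [ContinuousLinearMap.adjoint_inner_right, inner_zero_right]
  by_cases hz : IsWordPath f c I z
  · rw [wordOp_apply_of_isWordPath hT hz]
    exact e.orthonormal.2 fun h => hy ⟨z, hz, h⟩
  · rw [wordOp_apply_of_not_isWordPath hT hz, inner_zero_left]

theorem inner_iterate_eq_of_wordOp_apply_eq (hpart : ∀ i, InjOn f {x | c x = i})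
    {I : List (Fin k)} {a : H} (ha : wordOp T I a = a) {x : X} (hx : IsWordPath f c I x) :
    ⟪e (f^[I.length] x), a⟫_ℂ = ⟪e x, a⟫_ℂ := by
  conv_lhs => rw [← ha]
  rw [← ContinuousLinearMap.adjoint_inner_left, adjoint_wordOp_apply_of_isWordPath hT hpart hx]

theorem inner_eq_zero_of_wordOp_apply_eq {I : List (Fin k)} {a : H} (ha : wordOp T I a = a)
    {y : X} (hy : y ∉ f^[I.length] '' {x | IsWordPath f c I x}) : ⟪e y, a⟫_ℂ = 0 := by
  conv_lhs => rw [← ha]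
  rw [← ContinuousLinearMap.adjoint_inner_left, adjoint_wordOp_apply_of_notMem_image hT hy,
    inner_zero_left]

theorem isWordFixedPt_of_wordOp_apply_eq_of_inner_ne_zero (hpart : ∀ i, InjOn f {x | c x = i})
    (hu : UniqCond f c) {I : List (Fin k)} (hI : I ≠ []) {a : H} (ha : wordOp T I a = a)
    {y : X} (hy : ⟪e y, a⟫_ℂ ≠ 0) : IsWordFixedPt f c I y := by
  have hinj := injOn_iterate_length_setOf_isWordPath hpart I
  set S := {z | ⟪e z, a⟫_ℂ = ⟪e y, a⟫_ℂ}
  have hS : S ⊆ f^[I.length] '' (S ∩ {x | IsWordPath f c I x}) := by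
    intro z hz
    obtain ⟨x, hx, rfl⟩ : z ∈ f^[I.length] '' {x | IsWordPath f c I x} :=
      by_contra fun h => hy (hz ▸ inner_eq_zero_of_wordOp_apply_eq hT ha h)
    exact ⟨x, ⟨(inner_iterate_eq_of_wordOp_apply_eq hT hpart ha hx).symm.trans hz, hx⟩, rfl⟩
  have hSfin : S.Finite := e.orthonormal.finite_setOf_inner_eq a hy
  obtain ⟨hSD, hmaps⟩ := hSfin.subset_and_mapsTo_of_subset_image_inter hinj hS
  obtain ⟨p, hp, hper⟩ := hSfin.exists_pos_isPeriodicPt hmaps (hinj.mono hSD) (rfl : y ∈ S)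
  exact hu.isWordFixedPt_of_isPeriodicPt hI hp hper fun j => hSD (hmaps.iterate j rfl)

end WordOperators

theorem stmt_13_general {X : Type*} {k : ℕ} (f : X → X) (c : X → Fin k)
    (hpart : ∀ i : Fin k, Set.InjOn f {x | c x = i})
    (hu : UniqCond f c)
    {H : Type*} [NormedAddCommGroup H] [InnerProductSpace ℂ H] [CompleteSpace H]
    (e : HilbertBasis X ℂ H) (T : Fin k → H →L[ℂ] H)
    (hT : ∀ i x, T i (e x) = if c x = i then e (f x) else 0)
    (I : List (Fin k)) (hI : I ≠ [])
    (a : H) (ha : a ≠ 0)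
    (hfix : I.foldl (fun (A : H →L[ℂ] H) i => (T i).comp A) (ContinuousLinearMap.id ℂ H) a = a) :
    ∃ x : X, IsWordFixedPt f c I x ∧
      {v : H | I.foldl (fun (A : H →L[ℂ] H) i => (T i).comp A) (ContinuousLinearMap.id ℂ H) v = v}
        = {v : H | ∃ α : ℂ, v = α • (e x : H)} := by
  have hfixed {v : H} (hv : wordOp T I v = v) {y : X} (hy : ⟪e y, v⟫_ℂ ≠ 0) :=
    isWordFixedPt_of_wordOp_apply_eq_of_inner_ne_zero hT hpart hu hI hv hy
  obtain ⟨x, hx⟩ : ∃ x, ⟪e x, a⟫_ℂ ≠ 0 := by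
    by_contra! h
    exact ha (e.ext_inner fun z => by rw [h z, inner_zero_right])
  have hxI := hfixed hfix hx
  refine ⟨x, hxI, Set.ext fun v => ⟨fun hv => ⟨_, e.eq_inner_smul_of_inner_eq_zero ?_⟩, ?_⟩⟩
  · exact fun z hz => by_contra fun h => hz (hu I hI z x (hfixed hv h) hxI)
  · rintro ⟨α, rfl⟩
    change wordOp T I (α • e x) = α • e x
    rw [map_smul, wordOp_apply_of_isWordPath hT (isWordFixedPt_iff.mp hxI).2, hxI.1]

theorem stmt_13 {X : Type*} [Countable X] {k : ℕ} (f : X → X) (c : X → Fin k)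
    (hpart : ∀ i : Fin k, Set.InjOn f {x | c x = i})
    (hu : UniqCond f c)
    {H : Type*} [NormedAddCommGroup H] [InnerProductSpace ℂ H] [CompleteSpace H]
    (e : HilbertBasis X ℂ H) (T : Fin k → H →L[ℂ] H)
    (hT : ∀ i x, T i (e x) = if c x = i then e (f x) else 0)
    (I : List (Fin k)) (hI : I ≠ [])
    (hTI : I.foldl (fun (A : H →L[ℂ] H) i => (T i).comp A) (ContinuousLinearMap.id ℂ H) ≠ 0)
    (a : H) (ha : a ≠ 0)
    (hfix : I.foldl (fun (A : H →L[ℂ] H) i => (T i).comp A) (ContinuousLinearMap.id ℂ H) a = a) :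
    ∃ x : X, IsWordFixedPt f c I x ∧
      {v : H | I.foldl (fun (A : H →L[ℂ] H) i => (T i).comp A) (ContinuousLinearMap.id ℂ H) v = v}
        = {v : H | ∃ α : ℂ, v = α • (e x : H)} :=
  stmt_13_general f c hpart hu e T hT I hI a ha hfix
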